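/- Let u ∈ ℤ, i ∈ ZMod 3, k ≥ 1, and α = δᵘ·a_iᵏ, and suppose π(α) is a 3-cycle (the closure of α is a knot). Then k is even. If moreover α is a summit element with summit exponent u, then u + 1 ≡ 0 (mod 3). -/

import Mathlib

namespace Braid

/-- Relations of the dual (band-generator) presentation of the 3-braid group:
`a (i+1) * a i = a (i+2) * a (i+1)` for all `i : ZMod 3`. -/
def braidRels : Set (FreeGroup (ZMod 3)) :=
  { r | ∃ i : ZMod 3,
      r = FreeGroup.of (i + 1) * FreeGroup.of i *
          (FreeGroup.of (i + 2) * FreeGroup.of (i + 1))⁻¹ }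

/-- The 3-braid group with the band-generator presentation. -/
abbrev B3 := PresentedGroup braidRels

/-- The band generators `a i`, `i : ZMod 3`. -/
def a (i : ZMod 3) : B3 := PresentedGroup.of i

/-- The fundamental element `δ = a₂ * a₁`. -/
def δ : B3 := a 2 * a 1

/-- The submonoid of positive braids. -/
def Pos : Submonoid B3 := Submonoid.closure (Set.range a)

/-- The exponent-sum homomorphism, sending each generator to `1 : ℤ`. -/
def eHom : B3 →* Multiplicative ℤ :=
  PresentedGroup.toGroup (f := fun _ => Multiplicative.ofAdd (1 : ℤ)) (by
    rintro r ⟨i, rfl⟩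
    simp only [map_mul, map_inv, FreeGroup.lift_apply_of]
    group)

/-- The exponent sum (letter length on positive braids) as an integer. -/
def elen (x : B3) : ℤ := Multiplicative.toAdd (eHom x)

/-- The right complement `X* = X⁻¹ * δ^{e(X)}`. -/
def rc (X : B3) : B3 := X⁻¹ * δ ^ elen X

/-- The `n`-th power of the rotation automorphism `τ`: `τ^n (x) = δ^{-n} * x * δ^n`. -/
def tauPow (n : ℤ) (x : B3) : B3 := δ ^ (-n) * x * δ ^ n

/-- The positive braid represented by a list of generator indices. -/
def wordProd (l : List (ZMod 3)) : B3 := (l.map a).prod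

/-- A word is nondecreasing if each letter index is the previous one or the previous one
plus `1` (mod 3). -/
def NDWord (l : List (ZMod 3)) : Prop :=
  l.Chain' (fun x y => y = x ∨ y = x + 1)

/-- The syllable number of a word: the number of maximal constant blocks. -/
def syl : List (ZMod 3) → ℕ
  | [] => 0
  | [_] => 1
  | x :: y :: t => (if x = y then 0 else 1) + syl (y :: t)

/-- The permutations underlying the band generators. -/
def perm3 (i : ZMod 3) : Equiv.Perm (Fin 3) :=
  if i = 0 then Equiv.swap 0 2 else if i = 1 then Equiv.swap 0 1 else Equiv.swap 1 2

lemma perm3_rel : ∀ i : ZMod 3,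
    perm3 (i + 1) * perm3 i * (perm3 (i + 2) * perm3 (i + 1))⁻¹ = 1 := by decide

/-- The homomorphism to the symmetric group on 3 letters (underlying permutation). -/
def permOf : B3 →* Equiv.Perm (Fin 3) :=
  PresentedGroup.toGroup (f := perm3) (by
    rintro r ⟨i, rfl⟩
    simp only [map_mul, map_inv, FreeGroup.lift_apply_of]
    exact perm3_rel i)

/-- The set of band generators and their inverses. -/
def genSet : Set B3 := Set.range a ∪ Set.range (fun i => (a i)⁻¹)

/-- The band-generator word length of a 3-braid. -/
noncomputable def wordLen (x : B3) : ℕ :=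
  sInf { n | ∃ s : List B3, s.length = n ∧ (∀ g ∈ s, g ∈ genSet) ∧ s.prod = x }

/-- The minimal band-generator word length in the conjugacy class. -/
noncomputable def minConjLen (x : B3) : ℕ :=
  sInf { n | ∃ y, IsConj x y ∧ wordLen y = n }

/-- `α` is a summit element with summit exponent `u` if `δ^{-u} * α` is positive and `u` is
the maximal such exponent over the conjugacy class. -/
def IsSummit (α : B3) (u : ℤ) : Prop :=
  δ ^ (-u) * α ∈ Pos ∧ ∀ β : B3, IsConj α β → ∀ v : ℤ, δ ^ (-v) * β ∈ Pos → v ≤ u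

/-! The sign of `π(δ ^ u * a i ^ k)` is `(-1) ^ k`, since `π δ` is a 3-cycle and `π (a i)` a
transposition; a 3-cycle is even, so `k` is even, and then `π α = (π δ) ^ u`, which is trivial
when `3 ∣ u`. When `u ≡ 1 (mod 3)`, `δ ^ u` conjugates `a i` to `a (i + 1)`, so conjugating `α`
by `a i` gives `δ ^ u * (a (i + 1) * a i) * a i ^ (k - 2) = δ ^ (u + 1) * a i ^ (k - 2)`, a
conjugate with a larger exponent of `δ`. -/

lemma a_succ_mul_a_eq_a_add_two_mul_a_succ (i : ZMod 3) :
    a (i + 1) * a i = a (i + 2) * a (i + 1) :=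
  PresentedGroup.mk_eq_mk_of_mul_inv_mem (rels := braidRels) ⟨i, rfl⟩ |>.trans (map_mul _ _ _)

lemma a_succ_mul_a (i : ZMod 3) : a (i + 1) * a i = δ := by
  have e0 : a 1 * a 0 = a 2 * a 1 := a_succ_mul_a_eq_a_add_two_mul_a_succ 0
  have e1 : a 2 * a 1 = a 0 * a 2 := a_succ_mul_a_eq_a_add_two_mul_a_succ 1
  fin_cases i
  exacts [e0, rfl, e1.symm]

lemma a_mul_delta (i : ZMod 3) : a i * δ = δ * a (i + 1) := by
  have h : a i * a (i + 2) = δ := by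
    simpa [add_assoc, show (2 + 1 : ZMod 3) = 0 from rfl] using a_succ_mul_a (i + 2)
  calc a i * δ = a i * a (i + 2) * a (i + 1) := by
        rw [mul_assoc, ← a_succ_mul_a (i + 1), add_assoc, one_add_one_eq_two]
    _ = δ * a (i + 1) := by rw [h]

lemma a_mul_delta_inv (i : ZMod 3) : a i * δ⁻¹ = δ⁻¹ * a (i - 1) := by
  rw [mul_inv_eq_iff_eq_mul, mul_assoc, a_mul_delta, sub_add_cancel, inv_mul_cancel_left]

lemma a_mul_delta_zpow (i : ZMod 3) (u : ℤ) : a i * δ ^ u = δ ^ u * a (i + u) := by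
  induction u using Int.induction_on with
  | zero => simp
  | succ n ih =>
    rw [zpow_add_one, ← mul_assoc, ih, mul_assoc, a_mul_delta, ← mul_assoc, ← zpow_add_one]
    push_cast; ring_nf
  | pred n ih =>
    rw [zpow_sub_one, ← mul_assoc, ih, mul_assoc, a_mul_delta_inv, ← mul_assoc, ← zpow_sub_one]
    push_cast; ring_nf

lemma isConj_delta_zpow_mul_a_pow_add_two {u : ℤ} (hu : (u : ZMod 3) = 1) (i : ZMod 3)
    (k : ℕ) : IsConj (δ ^ u * a i ^ (k + 2)) (δ ^ (u + 1) * a i ^ k) := by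
  refine isConj_iff.2 ⟨a i, ?_⟩
  calc a i * (δ ^ u * a i ^ (k + 2)) * (a i)⁻¹ = a i * δ ^ u * a i * a i ^ k := by group
    _ = δ ^ (u + 1) * a i ^ k := by
      rw [a_mul_delta_zpow, hu, mul_assoc (δ ^ u), a_succ_mul_a, ← zpow_add_one]

lemma IsSummit.not_isConj_delta_zpow_succ_mul {α : B3} {u : ℤ} (h : IsSummit α u) {p : B3}
    (hp : p ∈ Pos) : ¬ IsConj α (δ ^ (u + 1) * p) := fun hc => by
  have := h.2 _ hc (u + 1) (by rwa [zpow_neg, inv_mul_cancel_left])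
  omega

lemma sign_permOf_a (i : ZMod 3) : Equiv.Perm.sign (permOf (a i)) = -1 := by
  change Equiv.Perm.sign (perm3 i) = -1
  revert i; decide

lemma permOf_a_sq (i : ZMod 3) : permOf (a i) ^ 2 = 1 := by
  change perm3 i ^ 2 = 1
  revert i; decide

lemma permOf_delta : permOf δ = perm3 2 * perm3 1 := map_mul _ _ _

lemma sign_permOf_delta : Equiv.Perm.sign (permOf δ) = 1 := by
  rw [permOf_delta]; decide

lemma permOf_delta_pow_three : permOf δ ^ 3 = 1 := by
  rw [permOf_delta]; decide

/-- Lemma 3.1: if `α = δ^u a_i^k` closes to a knot, then `k` is even; and if moreover `α` is a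
summit element, then `u + 1 ≡ 0 (mod 3)`. -/
theorem syllable_one (u : ℤ) (i : ZMod 3) (k : ℕ) (hk : 1 ≤ k) (α : B3)
    (hα : α = δ ^ u * (a i) ^ k) (h3 : (permOf α).IsThreeCycle) :
    Even k ∧ (IsSummit α u → (u + 1) % 3 = 0) := by
  subst hα
  have hperm : permOf (δ ^ u * a i ^ k) = permOf δ ^ u * permOf (a i) ^ k := by
    rw [map_mul, map_zpow, map_pow]
  have hk_even : Even k := by
    have hsign := h3.sign
    rw [hperm, map_mul, map_zpow, map_pow, sign_permOf_delta, sign_permOf_a, one_zpow,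
      one_mul] at hsign
    exact (neg_one_pow_eq_one_iff_even (by decide)).1 hsign
  refine ⟨hk_even, fun hsummit => ?_⟩
  have hu0 : u % 3 ≠ 0 := by
    intro h0
    obtain ⟨m, rfl⟩ := hk_even
    obtain ⟨n, rfl⟩ := Int.dvd_of_emod_eq_zero h0
    refine h3.ne_one ?_
    rw [hperm, ← two_mul, pow_mul, permOf_a_sq, one_pow, mul_one, zpow_mul, zpow_ofNat,
      permOf_delta_pow_three, one_zpow]
  have hu1 : u % 3 ≠ 1 := by
    intro h1
    obtain ⟨m, rfl⟩ : ∃ m, k = m + 2 := ⟨k - 2, by obtain ⟨j, hj⟩ := hk_even; omega⟩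
    have hu : (u : ZMod 3) = 1 := by simpa [h1] using (ZMod.intCast_mod u 3).symm
    exact hsummit.not_isConj_delta_zpow_succ_mul (pow_mem (Submonoid.subset_closure
      (Set.mem_range_self i)) m) (isConj_delta_zpow_mul_a_pow_add_two hu i m)
  omega
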